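/- arXiv:2309.12105 — 2 statements merged into one kernel-verified Lean document; each statement's English description precedes it below -/
import Mathlib

section
/- Coercivity of the bilinear form: For all (u,w) ∈ U it holds B((u,w),(u,w)) ≥ ‖w‖²_{L²} + (β²/2)‖u'‖²_{L²} + δ‖u‖²_{L²} = |||(u,w)|||². -/
open Set MeasureTheory

/-- The L² norm of `f` over the interval `(a,b)`. -/
noncomputable def L2 (f : ℝ → ℝ) (a b : ℝ) : ℝ := Real.sqrt (∫ x in a..b, (f x)^2)

/-- The bilinear form `B((u,w),(y,z))` of the mixed variational formulation of the
singularly perturbed fourth-order problem with a shift on `Ω = (0,2)`. -/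
noncomputable def Bform (ε : ℝ) (b c d : ℝ → ℝ) (u w y z : ℝ → ℝ) : ℝ :=
  -(ε * ∫ x in (0:ℝ)..2, deriv w x * deriv y x)
    + (∫ x in (0:ℝ)..2, b x * deriv u x * deriv y x)
    + (∫ x in (0:ℝ)..2, deriv b x * deriv u x * y x)
    + (∫ x in (0:ℝ)..2, c x * u x * y x)
    + (∫ x in (1:ℝ)..2, d x * u (x - 1) * y x)
    + ε * (∫ x in (0:ℝ)..2, deriv u x * deriv z x)
    + (∫ x in (0:ℝ)..2, w x * z x)

/-!
On the diagonal the two `ε`-terms of `B` cancel, leaving `‖w‖²` plus a first-order form in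
`u`. Pointwise, Young's inequality `|b' u' u| ≤ β²/2 u'² + ‖b'‖²/(2β²) u²` together with
`b ≥ β²` bounds the local part of that form from below by `β²/2 u'² + (c - ‖b'‖²/(2β²)) u²`,
and `|d u(x-1) u(x)| ≤ ‖d‖/2 (u(x-1)² + u(x)²)` costs the shift term at most `‖d‖/2 ‖u‖²`,
because the substitution `x ↦ x - 1` maps `(1,2)` onto `(0,1)`. The hypothesis on `c` absorbs
both losses.
-/

lemma L2_sq {a b : ℝ} (hab : a ≤ b) (f : ℝ → ℝ) : L2 f a b ^ 2 = ∫ x in a..b, f x ^ 2 :=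
  Real.sq_sqrt (intervalIntegral.integral_nonneg hab fun _ _ => sq_nonneg _)

lemma neg_le_mul_mul_of_abs_le {p M C a b : ℝ} (hp : |p| ≤ M) (hC : M * |a| * |b| ≤ C) :
    -C ≤ p * a * b := by
  have hM : 0 ≤ M := (abs_nonneg p).trans hp
  have : |p * a * b| ≤ M * |a| * |b| := by
    rw [abs_mul, abs_mul]
    gcongr
  linarith [neg_abs_le (p * a * b)]

lemma mul_abs_mul_abs_le_young {κ M : ℝ} (hκ : 0 < κ) (a b : ℝ) :
    M * |a| * |b| ≤ κ / 2 * a ^ 2 + M ^ 2 / (2 * κ) * b ^ 2 := by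
  have key : κ / 2 * a ^ 2 + M ^ 2 / (2 * κ) * b ^ 2 - M * |a| * |b|
      = (κ * |a| - M * |b|) ^ 2 / (2 * κ) := by
    field_simp
    rw [← sq_abs a, ← sq_abs b]
    ring
  nlinarith [div_nonneg (sq_nonneg (κ * |a| - M * |b|)) (by positivity : (0:ℝ) ≤ 2 * κ)]

lemma mul_abs_mul_abs_le_half_sq_add_sq {M : ℝ} (hM : 0 ≤ M) (a b : ℝ) :
    M * |a| * |b| ≤ M / 2 * (a ^ 2 + b ^ 2) := by
  have := two_mul_le_add_sq |a| |b|
  rw [sq_abs, sq_abs] at this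
  nlinarith

lemma quadratic_form_lower_bound {β δ M p q r t s : ℝ} (hβ : 0 < β) (hp : β ^ 2 ≤ p)
    (hq : |q| ≤ M) (hr : δ + M ^ 2 / (2 * β ^ 2) ≤ r) :
    β ^ 2 / 2 * t ^ 2 + δ * s ^ 2 ≤ p * t * t + q * t * s + r * s * s := by
  have hcross := neg_le_mul_mul_of_abs_le hq
    (mul_abs_mul_abs_le_young (κ := β ^ 2) (M := M) (by positivity) t s)
  nlinarith [mul_le_mul_of_nonneg_right hp (sq_nonneg t),
    mul_le_mul_of_nonneg_right hr (sq_nonneg s)]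

lemma integral_quadratic_form_lower_bound {β δ M a b : ℝ} {p q r f g : ℝ → ℝ} (hab : a ≤ b)
    (hβ : 0 < β) (hpc : Continuous p) (hqc : Continuous q) (hrc : Continuous r)
    (hfc : Continuous f) (hgc : Continuous g)
    (hp : ∀ x ∈ Icc a b, β ^ 2 ≤ p x) (hq : ∀ x ∈ Icc a b, |q x| ≤ M)
    (hr : ∀ x ∈ Icc a b, δ + M ^ 2 / (2 * β ^ 2) ≤ r x) :
    β ^ 2 / 2 * (∫ x in a..b, g x ^ 2) + δ * ∫ x in a..b, f x ^ 2
      ≤ (∫ x in a..b, p x * g x * g x) + (∫ x in a..b, q x * g x * f x)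
        + ∫ x in a..b, r x * f x * f x := by
  have hmono := intervalIntegral.integral_mono_on (μ := volume) hab
    ((by fun_prop : Continuous fun x => β ^ 2 / 2 * g x ^ 2 + δ * f x ^ 2).intervalIntegrable a b)
    ((by fun_prop : Continuous fun x => p x * g x * g x + q x * g x * f x + r x * f x * f x)
      |>.intervalIntegrable a b)
    fun x hx => quadratic_form_lower_bound hβ (hp x hx) (hq x hx) (hr x hx)
  rwa [intervalIntegral.integral_add, intervalIntegral.integral_const_mul,
    intervalIntegral.integral_const_mul, intervalIntegral.integral_add,
    intervalIntegral.integral_add] at hmono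
  all_goals exact Continuous.intervalIntegrable (by fun_prop) a b

lemma integral_shift_term_lower_bound {M h : ℝ} {d u : ℝ → ℝ} (hh : 0 ≤ h)
    (hdc : Continuous d) (huc : Continuous u) (hd : ∀ x ∈ Icc h (2 * h), |d x| ≤ M) :
    -(M / 2 * ∫ x in (0:ℝ)..2 * h, u x ^ 2) ≤ ∫ x in h..2 * h, d x * u (x - h) * u x := by
  have hM : 0 ≤ M := (abs_nonneg _).trans (hd h ⟨le_rfl, by linarith⟩)
  have hmono := intervalIntegral.integral_mono_on (μ := volume) (by linarith)
    ((by fun_prop : Continuous fun x => -(M / 2 * (u (x - h) ^ 2 + u x ^ 2)))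
      |>.intervalIntegrable h (2 * h))
    ((by fun_prop : Continuous fun x => d x * u (x - h) * u x) |>.intervalIntegrable h (2 * h))
    fun x hx => neg_le_mul_mul_of_abs_le (hd x hx) (mul_abs_mul_abs_le_half_sq_add_sq hM _ _)
  have hshift : ∫ x in h..2 * h, u (x - h) ^ 2 = ∫ x in (0:ℝ)..h, u x ^ 2 := by
    rw [intervalIntegral.integral_comp_sub_right (fun x => u x ^ 2), sub_self, two_mul,
      add_sub_cancel_right]
  have hsplit := intervalIntegral.integral_add_adjacent_intervals (μ := volume)
    (f := fun x => u x ^ 2) (a := 0) (b := h) (c := 2 * h)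
    ((huc.pow 2).intervalIntegrable _ _) ((huc.pow 2).intervalIntegrable _ _)
  rwa [intervalIntegral.integral_neg, intervalIntegral.integral_const_mul,
    intervalIntegral.integral_add, hshift, hsplit] at hmono
  all_goals exact Continuous.intervalIntegrable (by fun_prop) h (2 * h)

theorem coercivity_of_B_general
    (ε β δ Md Mb' : ℝ) (b c d : ℝ → ℝ)
    (hβ : 0 < β)
    (hb : ContDiff ℝ (⊤:ℕ∞) b) (hc : ContDiff ℝ (⊤:ℕ∞) c) (hd : ContDiff ℝ (⊤:ℕ∞) d)
    (hbβ : ∀ x ∈ Icc (0:ℝ) 2, β^2 ≤ b x)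
    (hdM : ∀ x ∈ Icc (1:ℝ) 2, |d x| ≤ Md)
    (hb'M : ∀ x ∈ Icc (0:ℝ) 2, |deriv b x| ≤ Mb')
    (hcδ : ∀ x ∈ Icc (0:ℝ) 2, δ ≤ c x - Md/2 - Mb'^2/(2*β^2))
    (u w : ℝ → ℝ) (hu : ContDiff ℝ (1:ℕ) u) :
    (L2 w 0 2)^2 + β^2/2 * (L2 (deriv u) 0 2)^2 + δ * (L2 u 0 2)^2
      ≤ Bform ε b c d u w u w := by
  have hlocal := integral_quadratic_form_lower_bound (δ := δ + Md / 2) zero_le_two hβ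
    hb.continuous (hb.continuous_deriv (by simp)) hc.continuous hu.continuous
    (hu.continuous_deriv le_rfl) hbβ hb'M fun x hx => by linarith [hcδ x hx]
  have hshift := integral_shift_term_lower_bound zero_le_one hd.continuous hu.continuous
    (by simpa only [mul_one] using hdM)
  have hcancel : ∫ x in (0:ℝ)..2, deriv w x * deriv u x
      = ∫ x in (0:ℝ)..2, deriv u x * deriv w x := by
    simp_rw [mul_comm]
  have hww : ∫ x in (0:ℝ)..2, w x * w x = ∫ x in (0:ℝ)..2, w x ^ 2 := by
    simp_rw [sq]
  rw [mul_one] at hshift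
  rw [L2_sq zero_le_two, L2_sq zero_le_two, L2_sq zero_le_two, Bform, hcancel, hww]
  linarith

/-- Coercivity of the bilinear form: for every `(u,w)` in
`U = H¹₀(0,2) × H¹(0,2)` (m = 1) resp. `U = H¹₀(0,2) × H¹₀(0,2)` (m = 2),
`B((u,w),(u,w)) ≥ ‖w‖² + β²/2 ‖u'‖² + δ ‖u‖² = |||(u,w)|||²`. -/
theorem coercivity_of_B
    (ε β δ Md Mb' : ℝ) (b c d : ℝ → ℝ) (m : ℕ) (hm : m = 1 ∨ m = 2)
    (hε : 0 < ε) (hβ : 0 < β) (hδ : 0 < δ)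
    (hb : ContDiff ℝ (⊤:ℕ∞) b) (hc : ContDiff ℝ (⊤:ℕ∞) c) (hd : ContDiff ℝ (⊤:ℕ∞) d)
    (hbβ : ∀ x ∈ Icc (0:ℝ) 2, β^2 ≤ b x)
    (hdM : ∀ x ∈ Icc (1:ℝ) 2, |d x| ≤ Md)
    (hb'M : ∀ x ∈ Icc (0:ℝ) 2, |deriv b x| ≤ Mb')
    (hcδ : ∀ x ∈ Icc (0:ℝ) 2, δ ≤ c x - Md/2 - Mb'^2/(2*β^2))
    (u w : ℝ → ℝ) (hu : ContDiff ℝ (1:ℕ) u) (hw : ContDiff ℝ (1:ℕ) w)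
    (hu0 : u 0 = 0) (hu2 : u 2 = 0)
    (hwbc : m = 2 → w 0 = 0 ∧ w 2 = 0) :
    (L2 w 0 2)^2 + β^2/2 * (L2 (deriv u) 0 2)^2 + δ * (L2 u 0 2)^2
      ≤ Bform ε b c d u w u w :=
  coercivity_of_B_general ε β δ Md Mb' b c d hβ hb hc hd hbβ hdM hb'M hcδ u w hu
end

section
/- Error estimation lemma: With (η_u,η_w) = (u − I₁u, w − I₂w) the interpolation errors and (ξ_u,ξ_w) = (u_h − I₁u, w_h − I₂w) ∈ U_h the discrete errors, it holds B((η_u,η_w),(ξ_u,ξ_w)) ≲ (‖η_u‖_{L²} + ‖η_w‖_{L²} + ‖b − b̄‖_{L∞}‖η_u'‖_{L²}) · |||(ξ_u,ξ_w)|||, where b̄ is the cell-wise average of b. -/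
/-! The interpolation error `η = v - Iv` vanishes at the nodes and is orthogonal on every cell
to polynomials of degree `q - 2`. Integrating by parts on a cell therefore gives
`∫ η' ξ' = -∫ η ξ'' = 0` for every discrete `ξ`: both `ε`-terms of `B` vanish, and `b` may be
replaced by `b - b̄` in the convection term since `b̄` is constant on cells. Integrating by parts
once more, the `b'`-term equals `-∫ η (b'' ξ + b' ξ')`. Every remaining term is a weighted product
of an interpolation error and a discrete error, bounded by Cauchy–Schwarz, and the discrete
norms are bounded by the energy norm. -/

open Set

/-- The square of the energy norm `|||(u,w)|||² = ‖w‖² + β²/2 ‖u'‖² + δ ‖u‖²`. -/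
noncomputable def energySq (β δ : ℝ) (u w : ℝ → ℝ) : ℝ :=
  (∫ x in (0:ℝ)..2, (w x)^2) + β^2/2 * (∫ x in (0:ℝ)..2, (deriv u x)^2)
    + δ * (∫ x in (0:ℝ)..2, (u x)^2)

/-- Membership in the space `U` (`H¹₀(Ω) × H¹(Ω)` for `m = 1`,
`H¹₀(Ω) × H¹₀(Ω)` for `m = 2`). -/
def MemU (m : ℕ) (u w : ℝ → ℝ) : Prop :=
  ContinuousOn u (Icc 0 2) ∧ ContinuousOn w (Icc 0 2) ∧
    u 0 = 0 ∧ u 2 = 0 ∧ (m = 2 → w 0 = 0 ∧ w 2 = 0)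

/-- `v` is a piecewise polynomial of degree at most `q` on the mesh given by `nodes`. -/
def PiecewisePoly (q N : ℕ) (nodes : ℕ → ℝ) (v : ℝ → ℝ) : Prop :=
  ∀ i < N, ∃ p : Polynomial ℝ, p.natDegree ≤ q ∧
    ∀ x ∈ Icc (nodes i) (nodes (i+1)), v x = Polynomial.eval x p

/-- `Iv` is the cell-wise interpolant of `v`: a continuous piecewise polynomial of degree
at most `q` matching the values of `v` at all mesh nodes, whose error is cell-wise
L²-orthogonal to polynomials of degree at most `q-2`. -/
def Interpolates (q N : ℕ) (nodes : ℕ → ℝ) (v Iv : ℝ → ℝ) : Prop :=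
  PiecewisePoly q N nodes Iv ∧ ContinuousOn Iv (Icc (nodes 0) (nodes N)) ∧
    (∀ i ≤ N, Iv (nodes i) = v (nodes i)) ∧
    ∀ i < N, ∀ ξ : Polynomial ℝ, ξ.natDegree + 2 ≤ q →
      ∫ x in (nodes i)..(nodes (i+1)), (v x - Iv x) * Polynomial.eval x ξ = 0

open MeasureTheory Polynomial

theorem integral_congr_Ioo {a b : ℝ} (hab : a ≤ b) {f g : ℝ → ℝ} (h : EqOn f g (Ioo a b)) :
    ∫ x in a..b, f x = ∫ x in a..b, g x := by
  rw [intervalIntegral.integral_of_le hab, intervalIntegral.integral_of_le hab,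
    integral_Ioc_eq_integral_Ioo, integral_Ioc_eq_integral_Ioo,
    setIntegral_congr_fun measurableSet_Ioo h]

theorem IntervalIntegrable.congr_Ioo {a b : ℝ} (hab : a ≤ b) {f g : ℝ → ℝ}
    (hg : IntervalIntegrable g volume a b) (h : EqOn f g (Ioo a b)) :
    IntervalIntegrable f volume a b := by
  rw [intervalIntegrable_iff_integrableOn_Ioc_of_le hab, integrableOn_Ioc_iff_integrableOn_Ioo]
    at hg ⊢
  exact hg.congr_fun h.symm measurableSet_Ioo

theorem HasDerivAt.congr_of_eqOn_Ioo {a b x f' : ℝ} {f g : ℝ → ℝ} (hg : HasDerivAt g f' x)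
    (h : EqOn f g (Ioo a b)) (hx : x ∈ Ioo a b) : HasDerivAt f f' x :=
  hg.congr_of_eventuallyEq (Filter.eventuallyEq_of_mem (Ioo_mem_nhds hx.1 hx.2) h)

theorem L2_nonneg (f : ℝ → ℝ) (a b : ℝ) : 0 ≤ L2 f a b := Real.sqrt_nonneg _

theorem integral_mul_le_L2_mul_L2 {a b : ℝ} (hab : a ≤ b) {f g : ℝ → ℝ}
    (hf : IntervalIntegrable (fun x => f x ^ 2) volume a b)
    (hg : IntervalIntegrable (fun x => g x ^ 2) volume a b)
    (hfg : IntervalIntegrable (fun x => f x * g x) volume a b) :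
    ∫ x in a..b, f x * g x ≤ L2 f a b * L2 g a b := by
  set A := ∫ x in a..b, f x ^ 2
  set B := ∫ x in a..b, f x * g x
  set C := ∫ x in a..b, g x ^ 2
  have hquad : ∀ t : ℝ, 0 ≤ A * (t * t) + (-2 * B) * t + C := fun t => by
    have hexp : ∫ x in a..b, (t * f x - g x) ^ 2 = A * (t * t) + (-2 * B) * t + C := by
      have hpt : ∀ x, (t * f x - g x) ^ 2
          = (t * t) * f x ^ 2 + (-2 * t) * (f x * g x) + g x ^ 2 := fun x => by ring
      simp_rw [hpt]
      rw [intervalIntegral.integral_add ((hf.const_mul _).add (hfg.const_mul _)) hg,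
        intervalIntegral.integral_add (hf.const_mul _) (hfg.const_mul _),
        intervalIntegral.integral_const_mul, intervalIntegral.integral_const_mul]
      ring
    exact hexp ▸ intervalIntegral.integral_nonneg hab fun x _ => sq_nonneg _
  have hA : 0 ≤ A := intervalIntegral.integral_nonneg hab fun x _ => sq_nonneg _
  have hB : B ^ 2 ≤ A * C := by
    have := discrim_le_zero hquad
    rw [discrim] at this
    nlinarith
  calc B ≤ √(B ^ 2) := Real.le_sqrt_of_sq_le le_rfl
    _ ≤ √(A * C) := Real.sqrt_le_sqrt hB
    _ = L2 f a b * L2 g a b := Real.sqrt_mul hA C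

theorem integral_mul_mul_le_L2_mul_L2 {a b M : ℝ} (hab : a ≤ b) {w f g : ℝ → ℝ}
    (hw : ∀ x ∈ Icc a b, |w x| ≤ M)
    (hwfg : IntervalIntegrable (fun x => w x * f x * g x) volume a b)
    (hfg : IntervalIntegrable (fun x => |f x| * |g x|) volume a b)
    (hf : IntervalIntegrable (fun x => f x ^ 2) volume a b)
    (hg : IntervalIntegrable (fun x => g x ^ 2) volume a b) :
    ∫ x in a..b, w x * f x * g x ≤ M * (L2 f a b * L2 g a b) := by
  have hM : 0 ≤ M := (abs_nonneg _).trans (hw a (left_mem_Icc.2 hab))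
  have habs : ∀ h : ℝ → ℝ, L2 (fun x => |h x|) a b = L2 h a b := fun h => by simp [L2]
  calc ∫ x in a..b, w x * f x * g x ≤ ∫ x in a..b, M * (|f x| * |g x|) := by
        refine intervalIntegral.integral_mono_on hab hwfg (hfg.const_mul M) fun x hx => ?_
        rw [← abs_mul, mul_assoc]
        exact (le_abs_self _).trans (abs_mul _ (f x * g x) ▸
          mul_le_mul_of_nonneg_right (hw x hx) (abs_nonneg _))
    _ = M * ∫ x in a..b, |f x| * |g x| := intervalIntegral.integral_const_mul _ _
    _ ≤ M * (L2 f a b * L2 g a b) := by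
        rw [← habs f, ← habs g]
        exact mul_le_mul_of_nonneg_left (integral_mul_le_L2_mul_L2 hab (by simpa using hf)
          (by simpa using hg) hfg) hM

theorem L2_mono_interval {a b c d : ℝ} {f : ℝ → ℝ} (hca : c ≤ a) (hab : a ≤ b) (hbd : b ≤ d)
    (hf : IntervalIntegrable (fun x => f x ^ 2) volume c d) : L2 f a b ≤ L2 f c d :=
  Real.sqrt_le_sqrt <| intervalIntegral.integral_mono_interval hca hab hbd
    (Filter.Eventually.of_forall fun x => sq_nonneg (f x)) hf

theorem L2_comp_sub_right (f : ℝ → ℝ) (a b t : ℝ) :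
    L2 (fun x => f (x - t)) a b = L2 f (a - t) (b - t) := by
  simp only [L2, intervalIntegral.integral_comp_sub_right fun x => f x ^ 2]

theorem integral_deriv_mul_eq_neg_integral_mul_deriv {a b : ℝ} (hab : a ≤ b)
    {f g g' φ φ' : ℝ → ℝ} (hfg : EqOn f g (Icc a b)) (hg : ∀ x, HasDerivAt g (g' x) x)
    (hg' : Continuous g') (hφ : ∀ x, HasDerivAt φ (φ' x) x) (hφ' : Continuous φ')
    (ha : f a = 0) (hb : f b = 0) :
    ∫ x in a..b, deriv f x * φ x = -∫ x in a..b, f x * φ' x := by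
  have hparts := intervalIntegral.integral_mul_deriv_eq_deriv_mul (fun x _ => hg x)
    (fun x _ => hφ x) (hg'.intervalIntegrable a b) (hφ'.intervalIntegrable a b)
  rw [← hfg (left_mem_Icc.2 hab), ← hfg (right_mem_Icc.2 hab), ha, hb] at hparts
  rw [integral_congr_Ioo hab fun x hx =>
      congrArg (· * φ x) ((hg x).congr_of_eqOn_Ioo (hfg.mono Ioo_subset_Icc_self) hx).deriv,
    intervalIntegral.integral_congr fun x hx =>
      congrArg (· * φ' x) (hfg (uIcc_of_le hab ▸ hx)), hparts]
  ring

section Cell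

variable {q : ℕ} {a b : ℝ} {v Iv S : ℝ → ℝ} {pI p : ℝ[X]}

theorem integral_deriv_interpError_mul (hab : a ≤ b) (hv : ContDiff ℝ 1 v)
    (hIv : EqOn Iv pI.eval (Icc a b)) (ha : Iv a = v a) (hb : Iv b = v b) {φ φ' : ℝ → ℝ}
    (hφ : ∀ x, HasDerivAt φ (φ' x) x) (hφ' : Continuous φ') :
    ∫ x in a..b, deriv (fun y => v y - Iv y) x * φ x = -∫ x in a..b, (v x - Iv x) * φ' x :=
  integral_deriv_mul_eq_neg_integral_mul_deriv hab (g := fun x => v x - pI.eval x)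
    (fun x hx => by simp only [hIv hx])
    (fun x => (hv.differentiable one_ne_zero x).hasDerivAt.sub (pI.hasDerivAt x))
    (hv.continuous_deriv_one.sub pI.derivative.continuous) hφ hφ'
    (sub_eq_zero.2 ha.symm) (sub_eq_zero.2 hb.symm)

theorem deriv_eq_of_eqOn_Icc (hS : EqOn S p.eval (Icc a b)) {x : ℝ} (hx : x ∈ Ioo a b) :
    deriv S x = p.derivative.eval x :=
  ((p.hasDerivAt x).congr_of_eqOn_Ioo (hS.mono Ioo_subset_Icc_self) hx).deriv

theorem integral_deriv_interpError_mul_deriv_eq_zero (hab : a ≤ b) (hv : ContDiff ℝ 1 v)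
    (hIv : EqOn Iv pI.eval (Icc a b)) (ha : Iv a = v a) (hb : Iv b = v b)
    (horth : ∀ ξ : ℝ[X], ξ.natDegree + 2 ≤ q → ∫ x in a..b, (v x - Iv x) * ξ.eval x = 0)
    (hS : EqOn S p.eval (Icc a b)) (hp : p.natDegree ≤ q) :
    ∫ x in a..b, deriv (fun y => v y - Iv y) x * deriv S x = 0 := by
  rw [integral_congr_Ioo hab (g := fun x => deriv (fun y => v y - Iv y) x * p.derivative.eval x)
      fun x hx => by simp only [deriv_eq_of_eqOn_Icc hS hx],
    integral_deriv_interpError_mul hab hv hIv ha hb (fun x => p.derivative.hasDerivAt x)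
      p.derivative.derivative.continuous, neg_eq_zero]
  rcases le_or_gt 2 q with hq | hq
  · refine horth _ ?_
    have := natDegree_derivative_le p
    have := natDegree_derivative_le (derivative p)
    omega
  · have : derivative (derivative p) = 0 := iterate_derivative_eq_zero (x := 2) (by omega)
    simp [this]

theorem integral_mul_deriv_interpError_mul (hab : a ≤ b) (hv : ContDiff ℝ 1 v)
    (hIv : EqOn Iv pI.eval (Icc a b)) (ha : Iv a = v a) (hb : Iv b = v b) {g : ℝ → ℝ}
    (hg : ContDiff ℝ 1 g) (hS : EqOn S p.eval (Icc a b)) :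
    ∫ x in a..b, g x * deriv (fun y => v y - Iv y) x * S x
      = -∫ x in a..b, (v x - Iv x) * (deriv g x * S x + g x * deriv S x) := by
  have hφ : ∀ x, HasDerivAt (fun y => g y * p.eval y)
      (deriv g x * p.eval x + g x * p.derivative.eval x) x := fun x =>
    (hg.differentiable one_ne_zero x).hasDerivAt.mul (p.hasDerivAt x)
  rw [integral_congr_Ioo hab (g := fun x => deriv (fun y => v y - Iv y) x * (g x * p.eval x))
      fun x hx => by simp only [hS (Ioo_subset_Icc_self hx)]; ring,
    integral_deriv_interpError_mul hab hv hIv ha hb hφ ((hg.continuous_deriv_one.mul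
      p.continuous).add (hg.continuous.mul p.derivative.continuous)),
    integral_congr_Ioo hab (f := fun x => (v x - Iv x) * (deriv g x * S x + g x * deriv S x))
      (g := fun x => (v x - Iv x) * (deriv g x * p.eval x + g x * p.derivative.eval x))
      fun x hx => by simp only [hS (Ioo_subset_Icc_self hx), deriv_eq_of_eqOn_Icc hS hx]]

end Cell

structure IsMesh (N : ℕ) (nodes : ℕ → ℝ) (a b : ℝ) : Prop where
  zero : nodes 0 = a
  last : nodes N = b
  lt_succ : ∀ i < N, nodes i < nodes (i + 1)

-- Open cells, since `deriv` of a piecewise polynomial takes junk values at the nodes.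
def CellwiseContinuous (N : ℕ) (nodes : ℕ → ℝ) (f : ℝ → ℝ) : Prop :=
  ∀ i < N, ∃ g : ℝ → ℝ, Continuous g ∧ EqOn f g (Ioo (nodes i) (nodes (i + 1)))

section Mesh

variable {N : ℕ} {nodes : ℕ → ℝ} {a b : ℝ} {f g w : ℝ → ℝ}

theorem IsMesh.le (hm : IsMesh N nodes a b) : a ≤ b :=
  hm.zero ▸ hm.last ▸ (strictMonoOn_Iic_of_lt_succ hm.lt_succ).monotoneOn
    (mem_Iic.2 N.zero_le) (mem_Iic.2 le_rfl) N.zero_le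

namespace CellwiseContinuous

theorem of_continuous (hf : Continuous f) : CellwiseContinuous N nodes f :=
  fun _ _ => ⟨f, hf, eqOn_refl _ _⟩

theorem of_eqOn_const (hf : ∀ i < N, ∃ k, EqOn f (fun _ => k) (Ioo (nodes i) (nodes (i + 1)))) :
    CellwiseContinuous N nodes f := fun i hi => by
  obtain ⟨k, hk⟩ := hf i hi
  exact ⟨fun _ => k, continuous_const, hk⟩

theorem mul (hf : CellwiseContinuous N nodes f) (hg : CellwiseContinuous N nodes g) :
    CellwiseContinuous N nodes (fun x => f x * g x) := fun i hi => by
  obtain ⟨f', hf', hff'⟩ := hf i hi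
  obtain ⟨g', hg', hgg'⟩ := hg i hi
  exact ⟨fun x => f' x * g' x, hf'.mul hg', fun x hx => by simp only [hff' hx, hgg' hx]⟩

theorem add (hf : CellwiseContinuous N nodes f) (hg : CellwiseContinuous N nodes g) :
    CellwiseContinuous N nodes (fun x => f x + g x) := fun i hi => by
  obtain ⟨f', hf', hff'⟩ := hf i hi
  obtain ⟨g', hg', hgg'⟩ := hg i hi
  exact ⟨fun x => f' x + g' x, hf'.add hg', fun x hx => by simp only [hff' hx, hgg' hx]⟩

theorem sub (hf : CellwiseContinuous N nodes f) (hg : CellwiseContinuous N nodes g) :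
    CellwiseContinuous N nodes (fun x => f x - g x) := fun i hi => by
  obtain ⟨f', hf', hff'⟩ := hf i hi
  obtain ⟨g', hg', hgg'⟩ := hg i hi
  exact ⟨fun x => f' x - g' x, hf'.sub hg', fun x hx => by simp only [hff' hx, hgg' hx]⟩

theorem abs (hf : CellwiseContinuous N nodes f) :
    CellwiseContinuous N nodes (fun x => |f x|) := fun i hi => by
  obtain ⟨f', hf', hff'⟩ := hf i hi
  exact ⟨fun x => |f' x|, hf'.abs, fun x hx => by simp only [hff' hx]⟩

theorem pow (hf : CellwiseContinuous N nodes f) (n : ℕ) :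
    CellwiseContinuous N nodes (fun x => f x ^ n) := fun i hi => by
  obtain ⟨f', hf', hff'⟩ := hf i hi
  exact ⟨fun x => f' x ^ n, hf'.pow n, fun x hx => by simp only [hff' hx]⟩

theorem intervalIntegrable_cell (hm : IsMesh N nodes a b) (hf : CellwiseContinuous N nodes f)
    {i : ℕ} (hi : i < N) : IntervalIntegrable f volume (nodes i) (nodes (i + 1)) := by
  obtain ⟨g, hg, hfg⟩ := hf i hi
  exact (hg.intervalIntegrable _ _).congr_Ioo (hm.lt_succ i hi).le hfg

theorem intervalIntegrable (hm : IsMesh N nodes a b) (hf : CellwiseContinuous N nodes f) :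
    IntervalIntegrable f volume a b := by
  rw [← hm.zero, ← hm.last]
  exact IntervalIntegrable.trans_iterate fun _ hi => hf.intervalIntegrable_cell hm hi

theorem integral_eq_sum (hm : IsMesh N nodes a b) (hf : CellwiseContinuous N nodes f) :
    ∫ x in a..b, f x = ∑ i ∈ Finset.range N, ∫ x in (nodes i)..(nodes (i + 1)), f x := by
  rw [← hm.zero, ← hm.last]
  exact (intervalIntegral.sum_integral_adjacent_intervals (a := nodes)
    fun _ hi => hf.intervalIntegrable_cell hm hi).symm

theorem integral_mul_mul_le_L2_mul_L2 {M : ℝ} (hm : IsMesh N nodes a b)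
    (hw : CellwiseContinuous N nodes w) (hf : CellwiseContinuous N nodes f)
    (hg : CellwiseContinuous N nodes g) (hM : ∀ x ∈ Icc a b, |w x| ≤ M) :
    ∫ x in a..b, w x * f x * g x ≤ M * (L2 f a b * L2 g a b) :=
  _root_.integral_mul_mul_le_L2_mul_L2 hm.le hM (((hw.mul hf).mul hg).intervalIntegrable hm)
    ((hf.abs.mul hg.abs).intervalIntegrable hm) ((hf.pow 2).intervalIntegrable hm)
    ((hg.pow 2).intervalIntegrable hm)

end CellwiseContinuous

variable {q : ℕ} {v Iv S : ℝ → ℝ}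

namespace PiecewisePoly

theorem sub (hf : PiecewisePoly q N nodes f) (hg : PiecewisePoly q N nodes g) :
    PiecewisePoly q N nodes (fun x => f x - g x) := fun i hi => by
  obtain ⟨p, hp, hfp⟩ := hf i hi
  obtain ⟨p', hp', hgp'⟩ := hg i hi
  exact ⟨p - p', (natDegree_sub_le p p').trans (max_le hp hp'),
    fun x hx => by simp only [eval_sub, hfp x hx, hgp' x hx]⟩

theorem cellwiseContinuous (hf : PiecewisePoly q N nodes f) :
    CellwiseContinuous N nodes f := fun i hi => by
  obtain ⟨p, -, hfp⟩ := hf i hi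
  exact ⟨fun x => p.eval x, p.continuous, fun x hx => hfp x (Ioo_subset_Icc_self hx)⟩

theorem cellwiseContinuous_deriv (hf : PiecewisePoly q N nodes f) :
    CellwiseContinuous N nodes (deriv f) := fun i hi => by
  obtain ⟨p, -, hfp⟩ := hf i hi
  exact ⟨fun x => p.derivative.eval x, p.derivative.continuous, fun x hx =>
    ((p.hasDerivAt x).congr_of_eqOn_Ioo (fun y hy => hfp y (Ioo_subset_Icc_self hy)) hx).deriv⟩

theorem cellwiseContinuous_sub (hIv : PiecewisePoly q N nodes Iv) (hv : Continuous v) :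
    CellwiseContinuous N nodes (fun x => v x - Iv x) :=
  (CellwiseContinuous.of_continuous hv).sub hIv.cellwiseContinuous

theorem cellwiseContinuous_deriv_sub (hIv : PiecewisePoly q N nodes Iv) (hv : ContDiff ℝ 1 v) :
    CellwiseContinuous N nodes (deriv fun x => v x - Iv x) := fun i hi => by
  obtain ⟨p, -, hIvp⟩ := hIv i hi
  refine ⟨fun x => deriv v x - p.derivative.eval x,
    hv.continuous_deriv_one.sub p.derivative.continuous, fun x hx => ?_⟩
  refine (((hv.differentiable one_ne_zero x).hasDerivAt.sub (p.hasDerivAt x)).congr_of_eqOn_Ioo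
    (fun y hy => ?_) hx).deriv
  simp only [hIvp y (Ioo_subset_Icc_self hy), Pi.sub_apply]

end PiecewisePoly

theorem integral_mul_deriv_interpError_mul_deriv_eq_zero (hm : IsMesh N nodes a b)
    (hv : ContDiff ℝ 1 v) (hIv : Interpolates q N nodes v Iv) (hS : PiecewisePoly q N nodes S)
    (hf : ∀ i < N, ∃ k, EqOn f (fun _ => k) (Ioo (nodes i) (nodes (i + 1)))) :
    ∫ x in a..b, f x * (deriv (fun y => v y - Iv y) x * deriv S x) = 0 := by
  rw [((CellwiseContinuous.of_eqOn_const hf).mul ((hIv.1.cellwiseContinuous_deriv_sub hv).mul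
    hS.cellwiseContinuous_deriv)).integral_eq_sum hm]
  refine Finset.sum_eq_zero fun i hi => ?_
  rw [Finset.mem_range] at hi
  obtain ⟨k, hk⟩ := hf i hi
  obtain ⟨pI, -, hpI⟩ := hIv.1 i hi
  obtain ⟨p, hp, hSp⟩ := hS i hi
  have hab := (hm.lt_succ i hi).le
  rw [integral_congr_Ioo hab fun x hx => congrArg (· * _) (hk hx),
    intervalIntegral.integral_const_mul, integral_deriv_interpError_mul_deriv_eq_zero hab hv hpI
      (hIv.2.2.1 i hi.le) (hIv.2.2.1 (i + 1) hi) (hIv.2.2.2 i hi) hSp hp, mul_zero]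

theorem integral_mul_deriv_interpError_mul_eq (hm : IsMesh N nodes a b) (hv : ContDiff ℝ 1 v)
    (hIv : Interpolates q N nodes v Iv) (hS : PiecewisePoly q N nodes S)
    (hg : ContDiff ℝ 1 g) :
    ∫ x in a..b, g x * deriv (fun y => v y - Iv y) x * S x
      = -∫ x in a..b, (v x - Iv x) * (deriv g x * S x + g x * deriv S x) := by
  have hgc : CellwiseContinuous N nodes g := .of_continuous hg.continuous
  rw [((hgc.mul (hIv.1.cellwiseContinuous_deriv_sub hv)).mul
      hS.cellwiseContinuous).integral_eq_sum hm,
    ((hIv.1.cellwiseContinuous_sub hv.continuous).mul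
      (((CellwiseContinuous.of_continuous hg.continuous_deriv_one).mul hS.cellwiseContinuous).add
        (hgc.mul hS.cellwiseContinuous_deriv))).integral_eq_sum hm,
    ← Finset.sum_neg_distrib]
  refine Finset.sum_congr rfl fun i hi => ?_
  rw [Finset.mem_range] at hi
  obtain ⟨pI, -, hpI⟩ := hIv.1 i hi
  obtain ⟨p, -, hSp⟩ := hS i hi
  exact integral_mul_deriv_interpError_mul (hm.lt_succ i hi).le hv hpI (hIv.2.2.1 i hi.le)
    (hIv.2.2.1 (i + 1) hi) hg hSp

end Mesh

theorem Bform_interpError_eq {ε : ℝ} {b c d bbar : ℝ → ℝ} {q N : ℕ} {nodes : ℕ → ℝ}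
    {u w Iu Iw uh wh : ℝ → ℝ} (hb : ContDiff ℝ 2 b) (hm : IsMesh N nodes 0 2)
    (hu : ContDiff ℝ 1 u) (hw : ContDiff ℝ 1 w) (huh : PiecewisePoly q N nodes uh)
    (hwh : PiecewisePoly q N nodes wh) (hIu : Interpolates q N nodes u Iu)
    (hIw : Interpolates q N nodes w Iw)
    (hbbar : ∀ i < N, ∃ k, EqOn bbar (fun _ => k) (Ioo (nodes i) (nodes (i + 1)))) :
    Bform ε b c d (fun x => u x - Iu x) (fun x => w x - Iw x)
        (fun x => uh x - Iu x) (fun x => wh x - Iw x)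
      = (∫ x in (0:ℝ)..2, (b x - bbar x) * deriv (fun y => u y - Iu y) x
            * deriv (fun y => uh y - Iu y) x)
        - (∫ x in (0:ℝ)..2, deriv (deriv b) x * (u x - Iu x) * (uh x - Iu x))
        - (∫ x in (0:ℝ)..2, deriv b x * (u x - Iu x) * deriv (fun y => uh y - Iu y) x)
        + (∫ x in (0:ℝ)..2, c x * (u x - Iu x) * (uh x - Iu x))
        + (∫ x in (1:ℝ)..2, d x * (u (x - 1) - Iu (x - 1)) * (uh x - Iu x))
        + ∫ x in (0:ℝ)..2, (w x - Iw x) * (wh x - Iw x) := by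
  have hξu := huh.sub hIu.1
  have hb' : ContDiff ℝ 1 (deriv b) := hb.deriv'
  have hconst : ∀ i < N, ∃ k : ℝ, EqOn (fun _ => (1 : ℝ)) (fun _ => k)
      (Ioo (nodes i) (nodes (i + 1))) := fun _ _ => ⟨1, eqOn_refl _ _⟩
  have hηu' := hIu.1.cellwiseContinuous_deriv_sub hu
  have hηu := hIu.1.cellwiseContinuous_sub hu.continuous
  have hbbarc := CellwiseContinuous.of_eqOn_const hbbar
  have hwu := integral_mul_deriv_interpError_mul_deriv_eq_zero hm hw hIw hξu hconst
  have huw := integral_mul_deriv_interpError_mul_deriv_eq_zero hm hu hIu (hwh.sub hIw.1) hconst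
  have hbbar0 := integral_mul_deriv_interpError_mul_deriv_eq_zero hm hu hIu hξu hbbar
  simp only [one_mul] at hwu huw
  have hbsplit : ∫ x in (0:ℝ)..2, b x * deriv (fun y => u y - Iu y) x
        * deriv (fun y => uh y - Iu y) x
      = ∫ x in (0:ℝ)..2, (b x - bbar x) * deriv (fun y => u y - Iu y) x
        * deriv (fun y => uh y - Iu y) x := by
    rw [← sub_eq_zero, ← intervalIntegral.integral_sub
      (((CellwiseContinuous.of_continuous hb.continuous).mul hηu').mul
        hξu.cellwiseContinuous_deriv |>.intervalIntegrable hm)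
      ((((CellwiseContinuous.of_continuous hb.continuous).sub hbbarc).mul hηu').mul
        hξu.cellwiseContinuous_deriv |>.intervalIntegrable hm)]
    exact (intervalIntegral.integral_congr fun x _ => by ring).trans hbbar0
  have hb'split : ∫ x in (0:ℝ)..2, (u x - Iu x)
        * (deriv (deriv b) x * (uh x - Iu x) + deriv b x * deriv (fun y => uh y - Iu y) x)
      = (∫ x in (0:ℝ)..2, deriv (deriv b) x * (u x - Iu x) * (uh x - Iu x))
        + ∫ x in (0:ℝ)..2, deriv b x * (u x - Iu x) * deriv (fun y => uh y - Iu y) x := by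
    rw [← intervalIntegral.integral_add
      ((CellwiseContinuous.of_continuous hb'.continuous_deriv_one).mul hηu |>.mul
        hξu.cellwiseContinuous |>.intervalIntegrable hm)
      ((CellwiseContinuous.of_continuous hb'.continuous).mul hηu |>.mul
        hξu.cellwiseContinuous_deriv |>.intervalIntegrable hm)]
    exact intervalIntegral.integral_congr fun x _ => by ring
  rw [Bform, hwu, huw, hbsplit, integral_mul_deriv_interpError_mul_eq hm hu hIu hξu hb',
    hb'split]
  ring

theorem integral_mul_comp_sub_one_mul_le {d f g : ℝ → ℝ} {M : ℝ}
    (hd : Continuous d) (hdM : ∀ x ∈ Icc (1:ℝ) 2, |d x| ≤ M)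
    (hf : ContinuousOn f (Icc 0 2)) (hg : ContinuousOn g (Icc 0 2)) :
    ∫ x in (1:ℝ)..2, d x * f (x - 1) * g x ≤ M * (L2 f 0 2 * L2 g 0 2) := by
  have hM : 0 ≤ M := (abs_nonneg _).trans (hdM 1 (left_mem_Icc.2 one_le_two))
  have hf1 : ContinuousOn (fun x => f (x - 1)) (Icc 1 2) :=
    hf.comp (continuous_sub_right 1).continuousOn fun x hx =>
      ⟨by linarith [hx.1], by linarith [hx.2]⟩
  have hg1 : ContinuousOn g (Icc 1 2) := hg.mono (Icc_subset_Icc_left zero_le_one)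
  have hf2 : IntervalIntegrable (fun x => f x ^ 2) volume 0 2 :=
    (hf.pow 2).intervalIntegrable_of_Icc zero_le_two
  have hg2 : IntervalIntegrable (fun x => g x ^ 2) volume 0 2 :=
    (hg.pow 2).intervalIntegrable_of_Icc zero_le_two
  calc ∫ x in (1:ℝ)..2, d x * f (x - 1) * g x
      ≤ M * (L2 (fun x => f (x - 1)) 1 2 * L2 g 1 2) :=
        integral_mul_mul_le_L2_mul_L2 one_le_two hdM
          (((hd.continuousOn.mul hf1).mul hg1).intervalIntegrable_of_Icc one_le_two)
          ((hf1.abs.mul hg1.abs).intervalIntegrable_of_Icc one_le_two)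
          ((hf1.pow 2).intervalIntegrable_of_Icc one_le_two)
          ((hg1.pow 2).intervalIntegrable_of_Icc one_le_two)
    _ ≤ M * (L2 f 0 2 * L2 g 0 2) := by
        rw [L2_comp_sub_right, sub_self, show (2:ℝ) - 1 = 1 by norm_num]
        exact mul_le_mul_of_nonneg_left (mul_le_mul (L2_mono_interval le_rfl zero_le_one
          one_le_two hf2) (L2_mono_interval zero_le_one one_le_two le_rfl hg2)
          (Real.sqrt_nonneg _) (Real.sqrt_nonneg _)) hM

theorem L2_add_L2_add_L2_le_sqrt_energySq {β δ : ℝ} (hβ : 0 < β) (hδ : 0 < δ) (u w : ℝ → ℝ) :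
    L2 u 0 2 + L2 (deriv u) 0 2 + L2 w 0 2
      ≤ (√(1 / δ) + √(2 / β ^ 2) + 1) * √(energySq β δ u w) := by
  have hu : 0 ≤ ∫ x in (0:ℝ)..2, u x ^ 2 :=
    intervalIntegral.integral_nonneg zero_le_two fun x _ => sq_nonneg _
  have hu' : 0 ≤ ∫ x in (0:ℝ)..2, deriv u x ^ 2 :=
    intervalIntegral.integral_nonneg zero_le_two fun x _ => sq_nonneg _
  have hw : 0 ≤ ∫ x in (0:ℝ)..2, w x ^ 2 :=
    intervalIntegral.integral_nonneg zero_le_two fun x _ => sq_nonneg _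
  have hβ2 : 0 < β ^ 2 := by positivity
  rw [add_mul, add_mul, one_mul, ← Real.sqrt_mul (by positivity), ← Real.sqrt_mul (by positivity)]
  unfold L2 energySq
  gcongr
  · rw [div_mul_eq_mul_div, one_mul, le_div_iff₀ hδ]
    nlinarith [mul_nonneg hβ2.le hu']
  · rw [div_mul_eq_mul_div, le_div_iff₀ hβ2]
    nlinarith [mul_nonneg hδ.le hu]
  · nlinarith [mul_nonneg hβ2.le hu', mul_nonneg hδ.le hu]

theorem Bform_interpError_le {ε Mbb Mb' Mb'' Mc Md : ℝ} {b c d bbar : ℝ → ℝ} {q N : ℕ}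
    {nodes : ℕ → ℝ} {u w Iu Iw uh wh : ℝ → ℝ} (hb : ContDiff ℝ 2 b) (hc : Continuous c)
    (hd : Continuous d) (hm : IsMesh N nodes 0 2) (hu : ContDiff ℝ 1 u) (hw : ContDiff ℝ 1 w)
    (huh : PiecewisePoly q N nodes uh) (hwh : PiecewisePoly q N nodes wh)
    (hIu : Interpolates q N nodes u Iu) (hIw : Interpolates q N nodes w Iw)
    (hηu : ContinuousOn (fun x => u x - Iu x) (Icc 0 2))
    (hξu : ContinuousOn (fun x => uh x - Iu x) (Icc 0 2))
    (hbbar : ∀ i < N, ∃ k, EqOn bbar (fun _ => k) (Ioo (nodes i) (nodes (i + 1))))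
    (hMbb : ∀ x ∈ Icc (0:ℝ) 2, |b x - bbar x| ≤ Mbb)
    (hMb' : ∀ x ∈ Icc (0:ℝ) 2, |deriv b x| ≤ Mb')
    (hMb'' : ∀ x ∈ Icc (0:ℝ) 2, |deriv (deriv b) x| ≤ Mb'')
    (hMc : ∀ x ∈ Icc (0:ℝ) 2, |c x| ≤ Mc) (hMd : ∀ x ∈ Icc (1:ℝ) 2, |d x| ≤ Md) :
    Bform ε b c d (fun x => u x - Iu x) (fun x => w x - Iw x)
        (fun x => uh x - Iu x) (fun x => wh x - Iw x)
      ≤ (2 + Mb' + Mb'' + Mc + Md)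
        * (L2 (fun x => u x - Iu x) 0 2 + L2 (fun x => w x - Iw x) 0 2
          + Mbb * L2 (deriv fun x => u x - Iu x) 0 2)
        * (L2 (fun x => uh x - Iu x) 0 2 + L2 (deriv fun x => uh x - Iu x) 0 2
          + L2 (fun x => wh x - Iw x) 0 2) := by
  have hb' : ContDiff ℝ 1 (deriv b) := hb.deriv'
  have hηuc := hIu.1.cellwiseContinuous_sub hu.continuous
  have hηu'c := hIu.1.cellwiseContinuous_deriv_sub hu
  have hηwc := hIw.1.cellwiseContinuous_sub hw.continuous
  have hξuc := (huh.sub hIu.1).cellwiseContinuous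
  have hξu'c := (huh.sub hIu.1).cellwiseContinuous_deriv
  have hξwc := (hwh.sub hIw.1).cellwiseContinuous
  have hconv := ((CellwiseContinuous.of_continuous hb.continuous).sub
    (.of_eqOn_const hbbar)).integral_mul_mul_le_L2_mul_L2 hm hηu'c hξu'c hMbb
  have hderiv₂ := (CellwiseContinuous.of_continuous (f := fun x => -deriv (deriv b) x)
    hb'.continuous_deriv_one.neg).integral_mul_mul_le_L2_mul_L2 hm hηuc hξuc
    fun x hx => (abs_neg _).trans_le (hMb'' x hx)
  have hderiv₁ := (CellwiseContinuous.of_continuous (f := fun x => -deriv b x)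
    hb'.continuous.neg).integral_mul_mul_le_L2_mul_L2 hm hηuc hξu'c
    fun x hx => (abs_neg _).trans_le (hMb' x hx)
  have hreact :=
    (CellwiseContinuous.of_continuous hc).integral_mul_mul_le_L2_mul_L2 hm hηuc hξuc hMc
  have hdelay := integral_mul_comp_sub_one_mul_le hd hMd hηu hξu
  have hmass := integral_mul_le_L2_mul_L2 zero_le_two ((hηwc.pow 2).intervalIntegrable hm)
    ((hξwc.pow 2).intervalIntegrable hm) ((hηwc.mul hξwc).intervalIntegrable hm)
  simp only [neg_mul, intervalIntegral.integral_neg] at hderiv₂ hderiv₁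
  have hMbb0 := (abs_nonneg _).trans (hMbb 0 (left_mem_Icc.2 zero_le_two))
  have hMb'0 := (abs_nonneg _).trans (hMb' 0 (left_mem_Icc.2 zero_le_two))
  have hMb''0 := (abs_nonneg _).trans (hMb'' 0 (left_mem_Icc.2 zero_le_two))
  have hMc0 := (abs_nonneg _).trans (hMc 0 (left_mem_Icc.2 zero_le_two))
  have hMd0 := (abs_nonneg _).trans (hMd 1 (left_mem_Icc.2 one_le_two))
  rw [Bform_interpError_eq hb hm hu hw huh hwh hIu hIw hbbar]
  set T := L2 (fun x => u x - Iu x) 0 2 + L2 (fun x => w x - Iw x) 0 2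
    + Mbb * L2 (deriv fun x => u x - Iu x) 0 2
  set S := L2 (fun x => uh x - Iu x) 0 2 + L2 (deriv fun x => uh x - Iu x) 0 2
    + L2 (fun x => wh x - Iw x) 0 2
  have hprod : ∀ {F G : ℝ}, 0 ≤ F → F ≤ T → 0 ≤ G → G ≤ S → F * G ≤ T * S :=
    fun hF hFT hG hGS => mul_le_mul hFT hGS hG (hF.trans hFT)
  have hηu0 := L2_nonneg (fun x => u x - Iu x) 0 2
  have hηw0 := L2_nonneg (fun x => w x - Iw x) 0 2
  have hηu'0 := mul_nonneg hMbb0 (L2_nonneg (deriv fun x => u x - Iu x) 0 2)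
  have hξu0 := L2_nonneg (fun x => uh x - Iu x) 0 2
  have hξu'0 := L2_nonneg (deriv fun x => uh x - Iu x) 0 2
  have hξw0 := L2_nonneg (fun x => wh x - Iw x) 0 2
  have hηuξu := hprod hηu0 (by linarith) hξu0 (by linarith)
  have hηuξu' := hprod hηu0 (by linarith) hξu'0 (by linarith)
  have hηu'ξu' := hprod hηu'0 (by linarith) hξu'0 (by linarith)
  have hηwξw := hprod hηw0 (by linarith) hξw0 (by linarith)
  linear_combination hconv + hderiv₂ + hderiv₁ + hreact + hdelay + hmass + hηu'ξu' + hηwξw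
    + Mb'' * hηuξu + Mc * hηuξu + Md * hηuξu + Mb' * hηuξu'

theorem error_estimation_lemma_general
    (b c d : ℝ → ℝ) (β δ : ℝ) (m q : ℕ)
    (hb : ContDiff ℝ (⊤:ℕ∞) b) (hc : ContDiff ℝ (⊤:ℕ∞) c) (hd : ContDiff ℝ (⊤:ℕ∞) d)
    (hβ : 0 < β) (hδ : 0 < δ)
    (Md Mb' : ℝ)
    (hdM : ∀ x ∈ Icc (1:ℝ) 2, |d x| ≤ Md)
    (hb'M : ∀ x ∈ Icc (0:ℝ) 2, |deriv b x| ≤ Mb') :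
    ∃ C > 0, ∀ (ε : ℝ) (N : ℕ) (nodes : ℕ → ℝ) (bbar : ℝ → ℝ) (Mbb : ℝ)
      (u w Iu Iw uh wh : ℝ → ℝ),
      0 < ε → ε ≤ 1 → 0 < N →
      nodes 0 = 0 → nodes N = 2 → (∀ i < N, nodes i < nodes (i+1)) →
      ContDiff ℝ (1:ℕ) u → ContDiff ℝ (1:ℕ) w →
      MemU m u w → MemU m uh wh →
      PiecewisePoly q N nodes uh → PiecewisePoly q N nodes wh →
      Interpolates q N nodes u Iu → Interpolates q N nodes w Iw →
      (∀ i < N, ∀ x ∈ Ico (nodes i) (nodes (i+1)),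
        bbar x = (∫ t in (nodes i)..(nodes (i+1)), b t) / (nodes (i+1) - nodes i)) →
      (∀ x ∈ Icc (0:ℝ) 2, |b x - bbar x| ≤ Mbb) →
      Bform ε b c d (fun x => u x - Iu x) (fun x => w x - Iw x)
          (fun x => uh x - Iu x) (fun x => wh x - Iw x)
        ≤ C * (L2 (fun x => u x - Iu x) 0 2 + L2 (fun x => w x - Iw x) 0 2
              + Mbb * L2 (fun x => deriv (fun t => u t - Iu t) x) 0 2)
            * Real.sqrt (energySq β δ (fun x => uh x - Iu x) (fun x => wh x - Iw x)) := by
  have hb2 : ContDiff ℝ 2 b := hb.of_le (WithTop.coe_le_coe.2 le_top)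
  obtain ⟨Mb'', hMb''⟩ := isCompact_Icc.exists_bound_of_continuousOn
    (hb2.deriv'.continuous_deriv_one.continuousOn (s := Icc (0:ℝ) 2))
  obtain ⟨Mc, hMc⟩ := isCompact_Icc.exists_bound_of_continuousOn
    (hc.continuous.continuousOn (s := Icc (0:ℝ) 2))
  have hK : 0 < 2 + Mb' + Mb'' + Mc + Md := by
    have h0 := left_mem_Icc.2 (zero_le_two (α := ℝ))
    linarith [(abs_nonneg _).trans (hb'M 0 h0), (norm_nonneg _).trans (hMb'' 0 h0),
      (norm_nonneg _).trans (hMc 0 h0), (abs_nonneg _).trans (hdM 1 (left_mem_Icc.2 one_le_two))]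
  refine ⟨(2 + Mb' + Mb'' + Mc + Md) * (√(1 / δ) + √(2 / β ^ 2) + 1),
    mul_pos hK (by positivity), ?_⟩
  intro ε N nodes bbar Mbb u w Iu Iw uh wh _ _ _ h0 h2 hnodes hu hw _ ⟨huhc, _⟩ huh hwh hIu hIw
    hbbar hMbb
  have hm : IsMesh N nodes 0 2 := ⟨h0, h2, hnodes⟩
  have hIuc : ContinuousOn Iu (Icc 0 2) := h0 ▸ h2 ▸ hIu.2.1
  have hMbb0 := (abs_nonneg _).trans (hMbb 0 (left_mem_Icc.2 zero_le_two))
  calc _ ≤ _ := Bform_interpError_le hb2 hc.continuous hd.continuous hm hu hw huh hwh hIu hIw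
        (hu.continuous.continuousOn.sub hIuc) (huhc.sub hIuc)
        (fun i hi => ⟨_, fun x hx => hbbar i hi x (Ioo_subset_Ico_self hx)⟩)
        hMbb hb'M hMb'' hMc hdM
    _ ≤ _ := mul_le_mul_of_nonneg_left (L2_add_L2_add_L2_le_sqrt_energySq hβ hδ _ _)
        (mul_nonneg hK.le (add_nonneg (add_nonneg (L2_nonneg _ _ _) (L2_nonneg _ _ _))
          (mul_nonneg hMbb0 (L2_nonneg _ _ _))))
    _ = _ := by ring

/-- Error estimation lemma (Lemma 2 of the paper): with `(η_u,η_w)` the interpolation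
errors and `(ξ_u,ξ_w) ∈ U_h` the discrete errors,
`B((η_u,η_w),(ξ_u,ξ_w)) ≲ (‖η_u‖ + ‖η_w‖ + ‖b-b̄‖_∞ ‖η_u'‖) |||(ξ_u,ξ_w)|||`,
where `b̄` is the cell-wise average of `b`. -/
theorem error_estimation_lemma
    (b c d : ℝ → ℝ) (β δ : ℝ) (m q : ℕ)
    (hm : m = 1 ∨ m = 2) (hq : 1 ≤ q)
    (hb : ContDiff ℝ (⊤:ℕ∞) b) (hc : ContDiff ℝ (⊤:ℕ∞) c) (hd : ContDiff ℝ (⊤:ℕ∞) d)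
    (hβ : 0 < β) (hδ : 0 < δ)
    (hbβ : ∀ x ∈ Icc (0:ℝ) 2, β^2 ≤ b x)
    (Md Mb' : ℝ)
    (hdM : ∀ x ∈ Icc (1:ℝ) 2, |d x| ≤ Md)
    (hb'M : ∀ x ∈ Icc (0:ℝ) 2, |deriv b x| ≤ Mb')
    (hcδ : ∀ x ∈ Icc (0:ℝ) 2, δ ≤ c x - Md/2 - Mb'^2/(2*β^2)) :
    ∃ C > 0, ∀ (ε : ℝ) (N : ℕ) (nodes : ℕ → ℝ) (bbar : ℝ → ℝ) (Mbb : ℝ)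
      (u w Iu Iw uh wh : ℝ → ℝ),
      0 < ε → ε ≤ 1 → 0 < N →
      nodes 0 = 0 → nodes N = 2 → (∀ i < N, nodes i < nodes (i+1)) →
      ContDiff ℝ (1:ℕ) u → ContDiff ℝ (1:ℕ) w →
      MemU m u w → MemU m uh wh →
      PiecewisePoly q N nodes uh → PiecewisePoly q N nodes wh →
      Interpolates q N nodes u Iu → Interpolates q N nodes w Iw →
      (∀ i < N, ∀ x ∈ Ico (nodes i) (nodes (i+1)),
        bbar x = (∫ t in (nodes i)..(nodes (i+1)), b t) / (nodes (i+1) - nodes i)) →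
      (∀ x ∈ Icc (0:ℝ) 2, |b x - bbar x| ≤ Mbb) →
      Bform ε b c d (fun x => u x - Iu x) (fun x => w x - Iw x)
          (fun x => uh x - Iu x) (fun x => wh x - Iw x)
        ≤ C * (L2 (fun x => u x - Iu x) 0 2 + L2 (fun x => w x - Iw x) 0 2
              + Mbb * L2 (fun x => deriv (fun t => u t - Iu t) x) 0 2)
            * Real.sqrt (energySq β δ (fun x => uh x - Iu x) (fun x => wh x - Iw x)) :=
  error_estimation_lemma_general b c d β δ m q hb hc hd hβ hδ Md Mb' hdM hb'M
end
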